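/- Let X be a real Banach space such that no point of ext(B_{X*}) is a point of continuity of the identity map I : (B_{X*}, w*) → (B_{X*}, w). Then no nonzero M-ideal J in X is weakly Hahn-Banach smooth. -/

import Mathlib

open NormedSpace Filter Topology

noncomputable section

/-- `f` is a point of continuity of the identity map
`I : (B_{E*}, w*) → (B_{E*}, w)` between the closed unit ball of the dual of `E`
with the relative weak-* topology and the same set with the relative weak topology. -/
def IsPoC {E : Type*} [NormedAddCommGroup E] [NormedSpace ℝ E] (f : StrongDual ℝ E) : Prop :=
  ContinuousWithinAt
    (fun g : WeakDual ℝ E => toWeakSpace ℝ (StrongDual ℝ E) (WeakDual.toStrongDual g))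
    {g : WeakDual ℝ E | ‖WeakDual.toStrongDual g‖ ≤ 1}
    (StrongDual.toWeakDual f)

/-- A closed subspace `Y` of `X` is an `M`-ideal if there is a continuous linear
projection `P` on `X*` with range the annihilator of `Y` such that
`‖f‖ = ‖P f‖ + ‖f - P f‖` for all `f ∈ X*`. -/
def IsMIdeal {X : Type*} [NormedAddCommGroup X] [NormedSpace ℝ X]
    (Y : Submodule ℝ X) : Prop :=
  IsClosed (Y : Set X) ∧
    ∃ P : StrongDual ℝ X →L[ℝ] StrongDual ℝ X,
      (∀ f, P (P f) = P f) ∧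
      Set.range P = {f : StrongDual ℝ X | ∀ y ∈ Y, f y = 0} ∧
      ∀ f : StrongDual ℝ X, ‖f‖ = ‖P f‖ + ‖f - P f‖

/-- A Banach space is weakly Hahn-Banach smooth if every norm-attaining functional has a
unique norm-preserving extension to the bidual. -/
def WeaklyHahnBanachSmooth (X : Type*) [NormedAddCommGroup X] [NormedSpace ℝ X] : Prop :=
  ∀ f : StrongDual ℝ X, (∃ x : X, ‖x‖ = 1 ∧ |f x| = ‖f‖) →
    ∀ F : StrongDual ℝ (StrongDual ℝ (StrongDual ℝ X)),
      (∀ x : X, F (inclusionInDoubleDual ℝ X x) = f x) →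
        (ContinuousLinearMap.hasOpNorm (E := StrongDual ℝ (StrongDual ℝ X)) (F := ℝ)
          (σ₁₂ := RingHom.id ℝ)).norm F = ‖f‖ →
        F = inclusionInDoubleDual ℝ (StrongDual ℝ X) f

/-!
Let `P` be the L-projection of `X*` onto `J⊥`. Restriction maps `ker P` isometrically onto `J*`;
writing `S` for its inverse, every `f ∈ X*` splits as `f = P f + S (f|_J)` with
`‖f‖ = ‖P f‖ + ‖f|_J‖`.

Take a unit vector `x ∈ J` and, by Krein–Milman applied to the weak-* compact face
`{g ∈ B_{J*} | g x = 1}`, an extreme point `e` of `B_{J*}` with `e x = 1`. If `J` were weakly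
Hahn–Banach smooth, `e` would be a point of continuity for `J`: along a net in `B_{J*}` tending
weak-* to `e`, every weak-* cluster point in `J***` is a norm-one extension of `e`, hence is `e`.
The lift `S e` is then an extreme point of `B_{X*}` (a segment through it restricts to a segment
through `e`, and its endpoints have zero `P`-part), and a point of continuity for `X`: if `g → S e`
weak-* inside the ball, then `‖P g‖ ≤ 1 - g x → 0` while `S (g|_J) → S e` weakly.
-/

open Metric Set

section

variable {𝕜 E : Type*} [NontriviallyNormedField 𝕜] [NormedAddCommGroup E] [NormedSpace 𝕜 E]

theorem norm_eq_one_of_apply_eq_one {e : StrongDual 𝕜 E} {x : E} (hx : ‖x‖ ≤ 1) (he : ‖e‖ ≤ 1)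
    (hex : e x = 1) : ‖e‖ = 1 := by
  refine le_antisymm he ?_
  calc (1 : ℝ) = ‖e x‖ := by rw [hex, norm_one]
    _ ≤ ‖e‖ * ‖x‖ := e.le_opNorm x
    _ ≤ ‖e‖ := mul_le_of_le_one_right (norm_nonneg e) hx

theorem exists_bidual_tendsto_of_ultrafilter [ProperSpace 𝕜] {α : Type*} (U : Ultrafilter α)
    (f : α → E) {r : ℝ} (hf : ∀ᶠ a in U, ‖f a‖ ≤ r) :
    ∃ F : StrongDual 𝕜 (StrongDual 𝕜 E), ‖F‖ ≤ r ∧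
      ∀ φ, Tendsto (fun a => φ (f a)) U (𝓝 (F φ)) := by
  obtain ⟨F, hF, hUF⟩ := (WeakDual.isCompact_closedBall (𝕜 := 𝕜) 0 r).ultrafilter_le_nhds
    (U.map (StrongDual.toWeakDual ∘ inclusionInDoubleDual 𝕜 E ∘ f))
    (le_principal_iff.2 <| Ultrafilter.mem_map.2 <| hf.mono fun _ ha =>
      mem_closedBall_zero_iff.2 ((double_dual_bound 𝕜 E _).trans ha))
  exact ⟨WeakDual.toStrongDual F, by simpa using hF,
    fun φ => ((WeakDual.eval_continuous φ).tendsto F).comp hUF⟩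

end

section

variable {E : Type*} [NormedAddCommGroup E] [NormedSpace ℝ E]

theorem isPoC_iff_tendsto {f : StrongDual ℝ E} :
    IsPoC f ↔ ∀ Φ : StrongDual ℝ (StrongDual ℝ E),
      Tendsto (fun g : WeakDual ℝ E => Φ (WeakDual.toStrongDual g))
        (𝓝[{g | ‖WeakDual.toStrongDual g‖ ≤ 1}] (StrongDual.toWeakDual f)) (𝓝 (Φ f)) :=
  WeakBilin.tendsto_iff_forall_eval_tendsto _ fun _ _ h =>
    SeparatingDual.eq_iff_forall_dual_eq.2 fun Φ => LinearMap.congr_fun h Φ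

theorem isPoC_of_weaklyHahnBanachSmooth (hE : WeaklyHahnBanachSmooth E) {e : StrongDual ℝ E}
    {x : E} (hx : ‖x‖ = 1) (he : ‖e‖ ≤ 1) (hex : e x = 1) : IsPoC e := by
  have he₁ := norm_eq_one_of_apply_eq_one hx.le he hex
  refine isPoC_iff_tendsto.2 fun Φ => tendsto_iff_ultrafilter _ _ _ |>.2 fun U hU => ?_
  obtain ⟨F, hF, hUF⟩ := exists_bidual_tendsto_of_ultrafilter (𝕜 := ℝ) U WeakDual.toStrongDual
    (hU self_mem_nhdsWithin)
  have hFe : ∀ y, F (inclusionInDoubleDual ℝ E y) = e y := fun y =>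
    tendsto_nhds_unique (hUF _)
      (((WeakDual.eval_continuous y).tendsto _).mono_left (hU.trans nhdsWithin_le_nhds))
  have hF₁ : ‖F‖ = 1 := norm_eq_one_of_apply_eq_one ((double_dual_bound ℝ E x).trans hx.le) hF
    (by rw [hFe, hex])
  have hF_eq := hE e ⟨x, hx, by rw [hex, he₁, abs_one]⟩ F hFe (hF₁.trans he₁.symm)
  simpa [hF_eq] using hUF Φ

theorem exists_mem_extremePoints_closedBall_apply_eq_norm (x : E) :
    ∃ e ∈ extremePoints ℝ (closedBall (0 : StrongDual ℝ E) 1), e x = ‖x‖ := by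
  have : LocallyConvexSpace ℝ (WeakDual ℝ E) := WeakBilin.locallyConvexSpace
  set B : Set (WeakDual ℝ E) := WeakDual.toStrongDual ⁻¹' closedBall 0 1
  have hB : IsCompact B := WeakDual.isCompact_closedBall 0 1
  have apply_le : ∀ g ∈ B, g x ≤ ‖x‖ := fun g hg =>
    (le_abs_self _).trans <| (g.le_of_opNorm_le (mem_closedBall_zero_iff.1 hg) x).trans_eq
      (one_mul _)
  set l : StrongDual ℝ (WeakDual ℝ E) := WeakBilin.eval (topDualPairing ℝ E) x
  have hexp : IsExposed ℝ B {g ∈ B | ∀ h ∈ B, l h ≤ l g} := fun _ => ⟨l, rfl⟩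
  obtain ⟨g₀, hg₀, hg₀x⟩ := exists_dual_vector'' ℝ x
  obtain ⟨e, he⟩ := (hexp.isCompact hB).extremePoints_nonempty
    ⟨StrongDual.toWeakDual g₀, mem_closedBall_zero_iff.2 hg₀,
      fun h hh => (apply_le h hh).trans_eq hg₀x.symm⟩
  refine ⟨WeakDual.toStrongDual e, hexp.isExtreme.extremePoints_subset_extremePoints he, ?_⟩
  exact le_antisymm (apply_le e he.1.1)
    (hg₀x.symm.trans_le (he.1.2 _ (mem_closedBall_zero_iff.2 hg₀)))

end

section MIdeal

open Function

variable {X : Type*} [NormedAddCommGroup X] [NormedSpace ℝ X]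

def dualRestrict (J : Submodule ℝ X) : StrongDual ℝ X →L[ℝ] StrongDual ℝ J :=
  (ContinuousLinearMap.compL ℝ J X ℝ).flip J.subtypeL

variable {J : Submodule ℝ X}

@[simp]
theorem dualRestrict_apply (f : StrongDual ℝ X) (y : J) : dualRestrict J f y = f y := rfl

theorem norm_dualRestrict_le (f : StrongDual ℝ X) : ‖dualRestrict J f‖ ≤ ‖f‖ :=
  (f.opNorm_comp_le J.subtypeL).trans
    (mul_le_of_le_one_right (norm_nonneg f) J.norm_subtypeL_le)

theorem dualRestrict_surjective : Surjective (dualRestrict J) := fun u =>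
  let ⟨g, hg, _⟩ := exists_extension_norm_eq J u
  ⟨g, ContinuousLinearMap.ext hg⟩

/-- `P` is an L-projection of `X*` onto the annihilator `J⊥`, as in the definition of an
M-ideal. -/
structure IsMProjection (J : Submodule ℝ X) (P : StrongDual ℝ X →L[ℝ] StrongDual ℝ X) :
    Prop where
  idem : ∀ f, P (P f) = P f
  range_eq : Set.range P = {f : StrongDual ℝ X | ∀ y ∈ J, f y = 0}
  norm_eq : ∀ f, ‖f‖ = ‖P f‖ + ‖f - P f‖

namespace IsMProjection

variable {P : StrongDual ℝ X →L[ℝ] StrongDual ℝ X}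

theorem apply_apply_eq_zero (hP : IsMProjection J P) (f : StrongDual ℝ X) {y : X} (hy : y ∈ J) :
    P f y = 0 :=
  (hP.range_eq ▸ mem_range_self f : P f ∈ {f : StrongDual ℝ X | ∀ y ∈ J, f y = 0}) y hy

theorem dualRestrict_sub_apply (hP : IsMProjection J P) (f : StrongDual ℝ X) :
    dualRestrict J (f - P f) = dualRestrict J f := by
  ext y
  simp [hP.apply_apply_eq_zero f y.2]

theorem apply_eq_self (hP : IsMProjection J P) {f : StrongDual ℝ X}
    (hf : dualRestrict J f = 0) : P f = f := by
  obtain ⟨g, rfl⟩ : f ∈ range P :=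
    hP.range_eq ▸ fun y hy => by simpa using congr($hf ⟨y, hy⟩)
  exact hP.idem g

theorem sub_apply_eq_of_dualRestrict_eq (hP : IsMProjection J P) {f g : StrongDual ℝ X}
    (h : dualRestrict J f = dualRestrict J g) : f - P f = g - P g := by
  have := hP.apply_eq_self (f := f - g) (by rw [map_sub, h, sub_self])
  rw [map_sub] at this
  exact sub_eq_sub_iff_sub_eq_sub.2 this.symm

theorem norm_sub_apply_eq (hP : IsMProjection J P) (f : StrongDual ℝ X) :
    ‖f - P f‖ = ‖dualRestrict J f‖ := by
  obtain ⟨g, hg, hgn⟩ := exists_extension_norm_eq J (dualRestrict J f)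
  have hgf : dualRestrict J g = dualRestrict J f := ContinuousLinearMap.ext hg
  refine le_antisymm ?_ ?_
  · calc ‖f - P f‖ = ‖g - P g‖ := by rw [hP.sub_apply_eq_of_dualRestrict_eq hgf]
      _ ≤ ‖g‖ := by linarith [hP.norm_eq g, norm_nonneg (P g)]
      _ = ‖dualRestrict J f‖ := hgn
  · calc ‖dualRestrict J f‖ = ‖dualRestrict J (f - P f)‖ := by rw [hP.dualRestrict_sub_apply]
      _ ≤ ‖f - P f‖ := norm_dualRestrict_le _

theorem norm_apply_le_norm_sub_apply (hP : IsMProjection J P) (f : StrongDual ℝ X) {x : X}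
    (hxJ : x ∈ J) (hx : ‖x‖ ≤ 1) : ‖P f‖ ≤ ‖f‖ - f x := by
  have hfx : f x ≤ ‖f - P f‖ :=
    calc f x = (f - P f) x := by simp [hP.apply_apply_eq_zero f hxJ]
      _ ≤ ‖(f - P f) x‖ := le_abs_self _
      _ ≤ ‖f - P f‖ := (f - P f).le_of_opNorm_le le_rfl x |>.trans
          (mul_le_of_le_one_right (norm_nonneg _) hx)
  linarith [hP.norm_eq f]

/-- The isometric inverse of restriction `J^# → J*`, where `J^# = ker P`. -/
def dualSection (hP : IsMProjection J P) : StrongDual ℝ J →ₗᵢ[ℝ] StrongDual ℝ X where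
  toFun u := surjInv dualRestrict_surjective u - P (surjInv dualRestrict_surjective u)
  map_add' u v := by
    rw [hP.sub_apply_eq_of_dualRestrict_eq
      (g := surjInv dualRestrict_surjective u + surjInv dualRestrict_surjective v)
      (by simp only [map_add, surjInv_eq]), map_add]
    abel
  map_smul' c u := by
    rw [hP.sub_apply_eq_of_dualRestrict_eq (g := c • surjInv dualRestrict_surjective u)
      (by simp only [map_smul, surjInv_eq]), map_smul, RingHom.id_apply, smul_sub]
  norm_map' u := (hP.norm_sub_apply_eq _).trans (by rw [surjInv_eq dualRestrict_surjective])

theorem dualSection_dualRestrict (hP : IsMProjection J P) (f : StrongDual ℝ X) :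
    hP.dualSection (dualRestrict J f) = f - P f :=
  hP.sub_apply_eq_of_dualRestrict_eq (surjInv_eq _ _)

theorem dualRestrict_dualSection (hP : IsMProjection J P) (u : StrongDual ℝ J) :
    dualRestrict J (hP.dualSection u) = u := by
  obtain ⟨f, rfl⟩ := dualRestrict_surjective u
  rw [hP.dualSection_dualRestrict, hP.dualRestrict_sub_apply]

theorem eq_dualSection_of_dualRestrict_eq (hP : IsMProjection J P) {f : StrongDual ℝ X}
    {u : StrongDual ℝ J} (hf : ‖f‖ ≤ ‖u‖) (h : dualRestrict J f = u) : f = hP.dualSection u := by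
  have hPf : P f = 0 := by
    have := hP.norm_eq f
    rw [hP.norm_sub_apply_eq, h] at this
    exact norm_le_zero_iff.1 (by linarith)
  rw [← h, hP.dualSection_dualRestrict, hPf, sub_zero]

theorem dualSection_mem_extremePoints (hP : IsMProjection J P) {e : StrongDual ℝ J}
    (he : e ∈ extremePoints ℝ (closedBall 0 1)) (he₁ : ‖e‖ = 1) :
    hP.dualSection e ∈ extremePoints ℝ (closedBall (0 : StrongDual ℝ X) 1) := by
  refine ⟨by simpa [he₁] using (hP.dualSection.norm_map e).le, fun u₁ hu₁ u₂ hu₂ hseg => ?_⟩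
  have hseg' : e ∈ openSegment ℝ (dualRestrict J u₁) (dualRestrict J u₂) := by
    obtain ⟨a, b, ha, hb, hab, hsum⟩ := hseg
    refine ⟨a, b, ha, hb, hab, ?_⟩
    rw [← map_smul, ← map_smul, ← map_add, hsum, hP.dualRestrict_dualSection]
  have hres : ∀ u ∈ closedBall (0 : StrongDual ℝ X) 1, dualRestrict J u ∈ closedBall 0 1 :=
    fun u hu => mem_closedBall.2 <| (dist_zero_right (dualRestrict J u)).trans_le
      ((norm_dualRestrict_le u).trans (mem_closedBall_zero_iff.1 hu))
  exact hP.eq_dualSection_of_dualRestrict_eq (he₁ ▸ mem_closedBall_zero_iff.1 hu₁)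
    (he.2 (hres u₁ hu₁) (hres u₂ hu₂) hseg')

theorem isPoC_dualSection (hP : IsMProjection J P) {e : StrongDual ℝ J} {x : J} (hx : ‖x‖ ≤ 1)
    (hex : e x = 1) (he : IsPoC e) : IsPoC (hP.dualSection e) := by
  set l := 𝓝[{g : WeakDual ℝ X | ‖WeakDual.toStrongDual g‖ ≤ 1}]
    (StrongDual.toWeakDual (hP.dualSection e))
  have hrestrict : Tendsto
      (fun g => StrongDual.toWeakDual (dualRestrict J (WeakDual.toStrongDual g))) l
      (𝓝[{h : WeakDual ℝ J | ‖WeakDual.toStrongDual h‖ ≤ 1}] (StrongDual.toWeakDual e)) := by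
    have hcont : Continuous fun g : WeakDual ℝ X =>
        StrongDual.toWeakDual (dualRestrict J (WeakDual.toStrongDual g)) :=
      WeakDual.continuous_of_continuous_eval fun y => WeakDual.eval_continuous (y : X)
    refine tendsto_nhdsWithin_iff.2 ⟨?_, ?_⟩
    · simpa [hP.dualRestrict_dualSection] using
        (hcont.tendsto (StrongDual.toWeakDual (hP.dualSection e))).mono_left nhdsWithin_le_nhds
    · filter_upwards [self_mem_nhdsWithin] with g hg using (norm_dualRestrict_le _).trans hg
  have hP_small : Tendsto (fun g : WeakDual ℝ X => ‖P (WeakDual.toStrongDual g)‖) l (𝓝 0) := by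
    have hSe : hP.dualSection e x = 1 := by
      rw [← dualRestrict_apply, hP.dualRestrict_dualSection, hex]
    have hgx : Tendsto (fun g : WeakDual ℝ X => 1 - g x) l (𝓝 (1 - hP.dualSection e x)) :=
      (tendsto_const_nhds.sub ((WeakDual.eval_continuous (x : X)).tendsto
        (StrongDual.toWeakDual (hP.dualSection e)))).mono_left nhdsWithin_le_nhds
    rw [hSe, sub_self] at hgx
    refine squeeze_zero' (Eventually.of_forall fun _ => norm_nonneg _) ?_ hgx
    filter_upwards [self_mem_nhdsWithin] with g hg
    exact (hP.norm_apply_le_norm_sub_apply _ x.2 hx).trans (sub_le_sub_right hg _)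
  rw [isPoC_iff_tendsto] at he ⊢
  intro Φ
  have hΦP : Tendsto (fun g : WeakDual ℝ X => Φ (P (WeakDual.toStrongDual g))) l (𝓝 0) :=
    squeeze_zero_norm (fun g => Φ.le_opNorm _) (by simpa using hP_small.const_mul ‖Φ‖)
  simpa [hP.dualSection_dualRestrict] using
    hΦP.add ((he (Φ.comp hP.dualSection.toContinuousLinearMap)).comp hrestrict)

end IsMProjection

end MIdeal

theorem stmt_11_general {X : Type*} [NormedAddCommGroup X] [NormedSpace ℝ X]
    (h : ∀ f ∈ Set.extremePoints ℝ (Metric.closedBall (0 : StrongDual ℝ X) 1), ¬ IsPoC f)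
    (J : Submodule ℝ X) (hJ : IsMIdeal J) (hJne : J ≠ ⊥) :
    ¬ WeaklyHahnBanachSmooth ↥J := by
  intro hW
  obtain ⟨-, P, hPP, hrange, hnorm⟩ := hJ
  have hP : IsMProjection J P := ⟨hPP, hrange, hnorm⟩
  have : Nontrivial J := Submodule.nontrivial_iff_ne_bot.2 hJne
  obtain ⟨x, hx⟩ := exists_norm_eq J zero_le_one
  obtain ⟨e, he, hex⟩ := exists_mem_extremePoints_closedBall_apply_eq_norm x
  rw [hx] at hex
  have he₁ : ‖e‖ ≤ 1 := mem_closedBall_zero_iff.1 (extremePoints_subset he)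
  exact h _ (hP.dualSection_mem_extremePoints he (norm_eq_one_of_apply_eq_one hx.le he₁ hex))
    (hP.isPoC_dualSection hx.le hex (isPoC_of_weaklyHahnBanachSmooth hW hx he₁ hex))

/-- If no extreme point of `B_{X*}` is a point of continuity of
`I : (B_{X*}, w*) → (B_{X*}, w)`, then no nonzero `M`-ideal in `X` is weakly
Hahn-Banach smooth. -/
theorem stmt_11 {X : Type*} [NormedAddCommGroup X] [NormedSpace ℝ X] [CompleteSpace X]
    (h : ∀ f ∈ Set.extremePoints ℝ (Metric.closedBall (0 : StrongDual ℝ X) 1), ¬ IsPoC f)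
    (J : Submodule ℝ X) (hJ : IsMIdeal J) (hJne : J ≠ ⊥) :
    ¬ WeaklyHahnBanachSmooth ↥J :=
  stmt_11_general h J hJ hJne
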